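/- arXiv:1908.07219 — 2 statements merged into one kernel-verified Lean document; each statement's English description precedes it below -/
import Mathlib

section
/- Let J be a real 2×2 matrix with tr(J) < 0 and det(J) > 0, D = diag(1,d) with 0 < d < 1, B_λ = D⁻¹(J - λI), and define P(λ) = tr(B_λ)² - 4 det(B_λ). If for some λ* > 0 both tr(B_{λ*}) > 0 and P(λ*) ≥ 0 hold, then P(λ) ≥ 0 and tr(B_λ) > 0 for all λ with 0 ≤ λ ≤ λ*. -/
open Matrix

/-- The diffusion matrix D = diag(1, d). -/
noncomputable def Dmat (d : ℝ) : Matrix (Fin 2) (Fin 2) ℝ := !![1, 0; 0, d]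

/-- B_λ = D⁻¹ (J - λ I). -/
noncomputable def Bmat (J : Matrix (Fin 2) (Fin 2) ℝ) (d lam : ℝ) :
    Matrix (Fin 2) (Fin 2) ℝ := (Dmat d)⁻¹ * (J - lam • 1)

/-- P(λ) = tr(B_λ)² - 4 det(B_λ). -/
noncomputable def Pdisc (J : Matrix (Fin 2) (Fin 2) ℝ) (d lam : ℝ) : ℝ :=
  (Bmat J d lam).trace ^ 2 - 4 * (Bmat J d lam).det

/-!
Both `tr B_λ` and `P(λ)` are explicit in `λ`: the trace is affine with negative slope, and `P` is
a quadratic with leading coefficient `(1 - 1/d)² > 0`, decreasing up to its vertex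
`λ_v = (J₁₁ - d J₀₀) / (1 - d)`. Positivity of `tr B_{λ*}` together with `tr J < 0` forces
`J₀₀ < 0 ≤ λ*`, and then `λ* ≤ λ_v`. Hence on `[0, λ*]` the trace stays above `tr B_{λ*} > 0`
and `P` stays above `P(λ*) ≥ 0`.
-/

lemma Dmat_inv {d : ℝ} (hd : d ≠ 0) : (Dmat d)⁻¹ = !![1, 0; 0, d⁻¹] := by
  apply inv_eq_right_inv
  simp [Dmat, hd, Matrix.one_fin_two]

lemma Bmat_eq (J : Matrix (Fin 2) (Fin 2) ℝ) {d : ℝ} (hd : d ≠ 0) (lam : ℝ) :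
    Bmat J d lam = !![J 0 0 - lam, J 0 1; J 1 0 / d, (J 1 1 - lam) / d] := by
  ext i j
  fin_cases i <;> fin_cases j <;>
    simp [Bmat, Dmat_inv hd, Matrix.mul_apply, Fin.sum_univ_two, div_eq_inv_mul]

lemma trace_Bmat (J : Matrix (Fin 2) (Fin 2) ℝ) {d : ℝ} (hd : d ≠ 0) (lam : ℝ) :
    (Bmat J d lam).trace = J 0 0 - lam + (J 1 1 - lam) / d := by
  rw [Bmat_eq J hd, Matrix.trace_fin_two_of]

lemma Pdisc_sub_Pdisc (J : Matrix (Fin 2) (Fin 2) ℝ) {d : ℝ} (hd : d ≠ 0) (lam mu : ℝ) :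
    Pdisc J d lam - Pdisc J d mu =
      (1 - d) * (mu - lam) * (2 * (J 1 1 - d * J 0 0) - (1 - d) * (lam + mu)) / d ^ 2 := by
  simp only [Pdisc, Bmat_eq J hd, Matrix.trace_fin_two_of, Matrix.det_fin_two_of]
  field_simp
  ring

lemma trace_Bmat_antitone (J : Matrix (Fin 2) (Fin 2) ℝ) {d : ℝ} (hd : 0 < d) :
    Antitone fun lam => (Bmat J d lam).trace := by
  intro lam mu hle
  simp only [trace_Bmat J hd.ne']
  gcongr

lemma Pdisc_antitoneOn (J : Matrix (Fin 2) (Fin 2) ℝ) {d : ℝ} (hd : 0 < d) (hd1 : d < 1) :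
    AntitoneOn (Pdisc J d) (Set.Iic ((J 1 1 - d * J 0 0) / (1 - d))) := by
  intro lam _ mu hmu hle
  rw [Set.mem_Iic, le_div_iff₀ (sub_pos.mpr hd1)] at hmu
  have hfactor : 0 ≤ 2 * (J 1 1 - d * J 0 0) - (1 - d) * (lam + mu) := by nlinarith
  have hlam_mu := sub_nonneg.mpr hle
  have hd1' := sub_nonneg.mpr hd1.le
  refine sub_nonneg.mp ?_
  rw [Pdisc_sub_Pdisc J hd.ne']
  positivity

lemma le_vertex_of_trace_Bmat_pos {J : Matrix (Fin 2) (Fin 2) ℝ} {d mu : ℝ} (hd : 0 < d)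
    (hd1 : d < 1) (htr : J.trace < 0) (hmu : 0 ≤ mu) (hB : 0 < (Bmat J d mu).trace) :
    mu ≤ (J 1 1 - d * J 0 0) / (1 - d) := by
  rw [Matrix.trace_fin_two] at htr
  rw [trace_Bmat J hd.ne', ← mul_lt_mul_iff_of_pos_left hd, mul_zero, mul_add,
    mul_div_cancel₀ _ hd.ne'] at hB
  have hJ00 : J 0 0 < 0 := by nlinarith
  rw [le_div_iff₀ (sub_pos.mpr hd1)]
  nlinarith [mul_pos hd (by linarith : 0 < mu - J 0 0)]

theorem stmt4_general (J : Matrix (Fin 2) (Fin 2) ℝ) (d lamStar : ℝ)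
    (hd : 0 < d) (hd1 : d < 1)
    (htr : J.trace < 0)
    (hB : 0 < (Bmat J d lamStar).trace) (hP : 0 ≤ Pdisc J d lamStar) :
    ∀ lam : ℝ, 0 ≤ lam → lam ≤ lamStar →
      0 ≤ Pdisc J d lam ∧ 0 < (Bmat J d lam).trace := by
  intro lam h0 hle
  have hvertex := le_vertex_of_trace_Bmat_pos hd hd1 htr (h0.trans hle) hB
  exact ⟨hP.trans (Pdisc_antitoneOn J hd hd1 (hle.trans hvertex) hvertex hle),
    hB.trans_le (trace_Bmat_antitone J hd hle)⟩

theorem stmt4 (J : Matrix (Fin 2) (Fin 2) ℝ) (d lamStar : ℝ)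
    (hd : 0 < d) (hd1 : d < 1)
    (htr : J.trace < 0) (hdet : 0 < J.det)
    (hlamStar : 0 < lamStar)
    (hB : 0 < (Bmat J d lamStar).trace) (hP : 0 ≤ Pdisc J d lamStar) :
    ∀ lam : ℝ, 0 ≤ lam → lam ≤ lamStar →
      0 ≤ Pdisc J d lam ∧ 0 < (Bmat J d lam).trace :=
  stmt4_general J d lamStar hd hd1 htr hB hP
end

section
/- Homogeneous Turing theorem (2-component): let J be a real 2×2 matrix and D = diag(1,d) with 0 < d ≤ 1. Suppose tr(J) < 0, det(J) > 0, tr(D⁻¹J) > 0, and tr(D⁻¹J)² - 4 det(D⁻¹J) > 0. Then there exists k² > 0 such that the matrix -k²D + J has an eigenvalue with positive real part, while for k² = 0 all eigenvalues of J have negative real part. -/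
/-!
Write `B = D⁻¹J`. Since `-k²D + J = -D(k² - B)`, the determinant of `-k²D + J` is `d` times the
characteristic polynomial of `B` at `k²`; at its vertex `k² = tr B / 2` it equals
`-d ((tr B)² - 4 det B) / 4 < 0`. A real 2×2 matrix with negative determinant has a positive real
eigenvalue. For `J` itself, `tr J < 0 < det J` makes both roots of `λ² - tr J λ + det J` lie in the
open left half-plane.
-/

open Matrix Polynomial

theorem Matrix.mem_spectrum_iff_fin_two {K : Type*} [Field K] (A : Matrix (Fin 2) (Fin 2) K)
    (r : K) : r ∈ spectrum K A ↔ r ^ 2 - A.trace * r + A.det = 0 := by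
  simp [mem_spectrum_iff_isRoot_charpoly, charpoly_fin_two]

theorem Matrix.mem_spectrum_map_ofReal_iff_fin_two (A : Matrix (Fin 2) (Fin 2) ℝ) (z : ℂ) :
    z ∈ spectrum ℂ (A.map Complex.ofReal) ↔ z ^ 2 - A.trace * z + A.det = 0 := by
  simp [mem_spectrum_iff_fin_two, trace_fin_two, det_fin_two]

theorem Matrix.det_neg_smul_add {K n : Type*} [Field K] [Fintype n] [DecidableEq n]
    (D J : Matrix n n K) (hD : IsUnit D.det) (k : K) :
    (-k • D + J).det = (-1) ^ Fintype.card n * D.det * (D⁻¹ * J).charpoly.eval k := by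
  have : -k • D + J = -(D * (scalar n k - D⁻¹ * J)) := by
    rw [mul_sub, mul_nonsing_inv_cancel_left _ _ hD, scalar_apply, ← smul_one_eq_diagonal,
      Matrix.mul_smul, mul_one, neg_sub, sub_eq_add_neg, add_comm, neg_smul]
  rw [this, det_neg, det_mul, eval_charpoly, mul_assoc]

theorem Matrix.det_neg_smul_add_fin_two {K : Type*} [Field K] (D J : Matrix (Fin 2) (Fin 2) K)
    (hD : IsUnit D.det) (k : K) :
    (-k • D + J).det = D.det * (k ^ 2 - (D⁻¹ * J).trace * k + (D⁻¹ * J).det) := by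
  rw [det_neg_smul_add D J hD, charpoly_fin_two]
  simp only [eval_add, eval_sub, eval_mul, eval_pow, eval_X, eval_C, Fintype.card_fin]
  ring

theorem exists_pos_sq_sub_mul_add_eq_zero (t δ : ℝ) (hδ : δ < 0) :
    ∃ x : ℝ, 0 < x ∧ x ^ 2 - t * x + δ = 0 := by
  have hdisc : 0 ≤ t ^ 2 - 4 * δ := by nlinarith [sq_nonneg t]
  have hsqrt : |t| < √(t ^ 2 - 4 * δ) := by
    rw [← Real.sqrt_sq_eq_abs]
    exact Real.sqrt_lt_sqrt (sq_nonneg t) (by linarith)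
  refine ⟨(t + √(t ^ 2 - 4 * δ)) / 2, by linarith [neg_abs_le t], ?_⟩
  linear_combination Real.sq_sqrt hdisc / 4

theorem Complex.re_neg_of_sq_sub_mul_add_eq_zero {t δ : ℝ} (ht : t < 0) (hδ : 0 < δ) {z : ℂ}
    (hz : z ^ 2 - t * z + δ = 0) : z.re < 0 := by
  have hre : z.re ^ 2 - z.im ^ 2 - t * z.re + δ = 0 := by
    simpa [sq] using congrArg Complex.re hz
  have him : z.im * (2 * z.re - t) = 0 := by
    linear_combination (by simpa [sq] using congrArg Complex.im hz : _ = _)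
  rcases mul_eq_zero.mp him with hreal | hvertex
  · rw [hreal] at hre
    nlinarith
  · linarith

theorem Matrix.exists_pos_mem_spectrum_map_ofReal_of_det_neg (A : Matrix (Fin 2) (Fin 2) ℝ)
    (hA : A.det < 0) : ∃ x : ℝ, 0 < x ∧ (x : ℂ) ∈ spectrum ℂ (A.map Complex.ofReal) := by
  obtain ⟨x, hx, hroot⟩ := exists_pos_sq_sub_mul_add_eq_zero A.trace A.det hA
  refine ⟨x, hx, (mem_spectrum_map_ofReal_iff_fin_two A x).mpr ?_⟩
  exact_mod_cast hroot

theorem Matrix.re_neg_of_mem_spectrum_map_ofReal (A : Matrix (Fin 2) (Fin 2) ℝ)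
    (htr : A.trace < 0) (hdet : 0 < A.det) {z : ℂ}
    (hz : z ∈ spectrum ℂ (A.map Complex.ofReal)) : z.re < 0 :=
  Complex.re_neg_of_sq_sub_mul_add_eq_zero htr hdet
    ((mem_spectrum_map_ofReal_iff_fin_two A z).mp hz)

theorem det_Dmat (d : ℝ) : (Dmat d).det = d := by
  simp [Dmat]

theorem stmt17_general (J : Matrix (Fin 2) (Fin 2) ℝ) (d : ℝ)
    (hd : 0 < d)
    (htr : J.trace < 0) (hdet : 0 < J.det)
    (htrB : 0 < ((Dmat d)⁻¹ * J).trace)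
    (hP : 0 < ((Dmat d)⁻¹ * J).trace ^ 2 - 4 * ((Dmat d)⁻¹ * J).det) :
    (∃ k2 : ℝ, 0 < k2 ∧ ∃ lam ∈ spectrum ℂ
        (((-k2) • Dmat d + J).map Complex.ofReal), 0 < lam.re) ∧
    (∀ lam ∈ spectrum ℂ (J.map Complex.ofReal), lam.re < 0) := by
  set B := (Dmat d)⁻¹ * J
  refine ⟨⟨B.trace / 2, by positivity, ?_⟩,
    fun lam hlam => J.re_neg_of_mem_spectrum_map_ofReal htr hdet hlam⟩
  have hunstable : ((-(B.trace / 2)) • Dmat d + J).det < 0 := by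
    have hunit : IsUnit (Dmat d).det := by simpa [det_Dmat] using hd.ne'
    rw [det_neg_smul_add_fin_two _ _ hunit, det_Dmat]
    nlinarith
  obtain ⟨x, hx, hmem⟩ := exists_pos_mem_spectrum_map_ofReal_of_det_neg _ hunstable
  exact ⟨x, hmem, by simpa using hx⟩

theorem stmt17 (J : Matrix (Fin 2) (Fin 2) ℝ) (d : ℝ)
    (hd : 0 < d) (hd1 : d ≤ 1)
    (htr : J.trace < 0) (hdet : 0 < J.det)
    (htrB : 0 < ((Dmat d)⁻¹ * J).trace)
    (hP : 0 < ((Dmat d)⁻¹ * J).trace ^ 2 - 4 * ((Dmat d)⁻¹ * J).det) :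
    (∃ k2 : ℝ, 0 < k2 ∧ ∃ lam ∈ spectrum ℂ
        (((-k2) • Dmat d + J).map Complex.ofReal), 0 < lam.re) ∧
    (∀ lam ∈ spectrum ℂ (J.map Complex.ofReal), lam.re < 0) :=
  stmt17_general J d hd htr hdet htrB hP
end
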